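/- Let V be a symmetric positive definite real d×d matrix, θ̂ ∈ ℝ^d, β ≥ 0, and B := {θ ∈ ℝ^d : ‖θ̂ − θ‖_V ≤ β}. Let α ∈ ℝ, φ, ψ, ψ_b ∈ ℝ^d with ‖φ‖₂ ≤ 1, and set S := sup_{v ∈ B} ψ_bᵀ v. If ψᵀθ̂ ≥ β/√(λ_min(V)) + (1 − α)·S and φᵀθ̂ ≥ ψᵀθ̂, then for every v ∈ B one has φᵀv ≥ (1 − α)·S; in particular inf_{v ∈ B} φᵀv ≥ (1 − α)·sup_{v ∈ B} ψ_bᵀv. -/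

import Mathlib

/-!
Every `v ∈ B` satisfies `‖θ̂ - v‖₂ ≤ ‖θ̂ - v‖_V / √λ_min(V) ≤ β / √λ_min(V)`, so by Cauchy–Schwarz
and `‖φ‖₂ ≤ 1` we get `φᵀv ≥ φᵀθ̂ - β / √λ_min(V) ≥ ψᵀθ̂ - β / √λ_min(V) ≥ (1 - α) S`.
As `θ̂ ∈ B`, the set is nonempty and the bound passes to the infimum over `B`.
-/

open Matrix

open scoped Classical in
/-- smallest eigenvalue of a real matrix (junk value 0 if not Hermitian) -/
noncomputable def lamMin {d : ℕ} (V : Matrix (Fin d) (Fin d) ℝ) : ℝ :=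
  if h : V.IsHermitian then ⨅ i, h.eigenvalues i else 0

open scoped Classical in
/-- largest eigenvalue of a real matrix (junk value 0 if not Hermitian) -/
noncomputable def lamMax {d : ℕ} (V : Matrix (Fin d) (Fin d) ℝ) : ℝ :=
  if h : V.IsHermitian then ⨆ i, h.eigenvalues i else 0

/-- weighted norm ‖z‖_V = √(zᵀ V z) -/
noncomputable def wnorm {d : ℕ} (V : Matrix (Fin d) (Fin d) ℝ) (z : Fin d → ℝ) : ℝ :=
  Real.sqrt (z ⬝ᵥ V.mulVec z)

/-- Euclidean norm of a vector in ℝ^d -/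
noncomputable def eucNorm {d : ℕ} (z : Fin d → ℝ) : ℝ :=
  Real.sqrt (z ⬝ᵥ z)

open scoped MatrixOrder

section Eigenvalues

variable {d : ℕ} {V : Matrix (Fin d) (Fin d) ℝ}

lemma lamMin_le_eigenvalues (hV : V.IsHermitian) (i : Fin d) : lamMin V ≤ hV.eigenvalues i := by
  rw [lamMin, dif_pos hV]
  exact ciInf_le (Finite.bddBelow_range _) i

lemma lamMin_pos [Nonempty (Fin d)] (hV : V.PosDef) : 0 < lamMin V := by
  rw [lamMin, dif_pos hV.isHermitian]
  obtain ⟨i, hi⟩ := exists_eq_ciInf_of_finite (f := hV.isHermitian.eigenvalues)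
  exact hi ▸ hV.eigenvalues_pos i

lemma algebraMap_lamMin_le (hV : V.IsHermitian) : algebraMap ℝ _ (lamMin V) ≤ V := by
  rw [algebraMap_le_iff_le_spectrum hV.isSelfAdjoint, hV.spectrum_real_eq_range_eigenvalues]
  rintro _ ⟨i, rfl⟩
  exact lamMin_le_eigenvalues hV i

lemma lamMin_mul_dotProduct_self_le (hV : V.IsHermitian) (z : Fin d → ℝ) :
    lamMin V * (z ⬝ᵥ z) ≤ z ⬝ᵥ V *ᵥ z := by
  have h := (le_iff.mp (algebraMap_lamMin_le hV)).dotProduct_mulVec_nonneg z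
  simp only [star_trivial, Algebra.algebraMap_eq_smul_one, sub_mulVec, smul_mulVec, one_mulVec,
    dotProduct_sub, dotProduct_smul, smul_eq_mul] at h
  linarith

end Eigenvalues

lemma eucNorm_nonneg {d : ℕ} (z : Fin d → ℝ) : 0 ≤ eucNorm z := Real.sqrt_nonneg _

lemma dotProduct_le_eucNorm_mul_eucNorm {d : ℕ} (x y : Fin d → ℝ) :
    x ⬝ᵥ y ≤ eucNorm x * eucNorm y := by
  simpa only [dotProduct, eucNorm, sq] using Real.sum_mul_le_sqrt_mul_sqrt Finset.univ x y

lemma eucNorm_le_wnorm_div_sqrt_lamMin {d : ℕ} {V : Matrix (Fin d) (Fin d) ℝ} (hV : V.PosDef)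
    (z : Fin d → ℝ) : eucNorm z ≤ wnorm V z / √(lamMin V) := by
  rcases isEmpty_or_nonempty (Fin d) with hd | hd
  · have hz : eucNorm z = 0 := by simp [eucNorm, dotProduct]
    exact hz ▸ div_nonneg (Real.sqrt_nonneg _) (Real.sqrt_nonneg _)
  · rw [le_div_iff₀ (Real.sqrt_pos.2 (lamMin_pos hV)), eucNorm, wnorm,
      ← Real.sqrt_mul (by simpa using dotProduct_self_star_nonneg z)]
    exact Real.sqrt_le_sqrt (by linarith [lamMin_mul_dotProduct_self_le hV.isHermitian z])

lemma dotProduct_sub_div_sqrt_lamMin_le {d : ℕ} {V : Matrix (Fin d) (Fin d) ℝ} (hV : V.PosDef)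
    {θhat v φ : Fin d → ℝ} {β : ℝ} (hφ : eucNorm φ ≤ 1) (hv : wnorm V (θhat - v) ≤ β) :
    φ ⬝ᵥ θhat - β / √(lamMin V) ≤ φ ⬝ᵥ v := by
  have hdev : φ ⬝ᵥ (θhat - v) ≤ β / √(lamMin V) :=
    calc φ ⬝ᵥ (θhat - v) ≤ eucNorm φ * eucNorm (θhat - v) := dotProduct_le_eucNorm_mul_eucNorm _ _
      _ ≤ eucNorm (θhat - v) := mul_le_of_le_one_left (eucNorm_nonneg _) hφ
      _ ≤ wnorm V (θhat - v) / √(lamMin V) := eucNorm_le_wnorm_div_sqrt_lamMin hV _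
      _ ≤ β / √(lamMin V) := div_le_div_of_nonneg_right hv (Real.sqrt_nonneg _)
  rw [dotProduct_sub] at hdev
  linarith

theorem stmt17 {d : ℕ} (V : Matrix (Fin d) (Fin d) ℝ) (hV : V.PosDef)
    (θhat : Fin d → ℝ) (β : ℝ) (hβ : 0 ≤ β)
    (B : Set (Fin d → ℝ)) (hB : B = {θ : Fin d → ℝ | wnorm V (θhat - θ) ≤ β})
    (α : ℝ) (φ ψ ψb : Fin d → ℝ) (hφ : eucNorm φ ≤ 1)
    (S : ℝ) (hS : S = ⨆ v : B, ψb ⬝ᵥ (v : Fin d → ℝ))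
    (h1 : ψ ⬝ᵥ θhat ≥ β / Real.sqrt (lamMin V) + (1 - α) * S)
    (h2 : φ ⬝ᵥ θhat ≥ ψ ⬝ᵥ θhat) :
    (∀ v ∈ B, φ ⬝ᵥ v ≥ (1 - α) * S) ∧
      (⨅ v : B, φ ⬝ᵥ (v : Fin d → ℝ)) ≥
        (1 - α) * ⨆ v : B, ψb ⬝ᵥ (v : Fin d → ℝ) := by
  have hbound : ∀ v ∈ B, φ ⬝ᵥ v ≥ (1 - α) * S := fun v hv => by
    rw [hB] at hv
    linarith [dotProduct_sub_div_sqrt_lamMin_le hV hφ hv]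
  have hcenter : θhat ∈ B := by simpa [hB, wnorm] using hβ
  have : Nonempty B := ⟨⟨θhat, hcenter⟩⟩
  exact ⟨hbound, hS ▸ le_ciInf fun v => hbound v v.2⟩
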